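/- arXiv:math/0509325 — 8 statements merged into one kernel-verified Lean document; each statement's English description precedes it below -/
import Mathlib

section
/- If C ⊆ Z_{2m}^n is a code of cardinality M whose d*-distance between any two distinct codewords is at least d, then φ(C) ⊆ Z_2^{mn} is a binary code of length mn, cardinality M, and minimum Hamming distance at least d. -/
/-- The weight `wt*` on `Z_{2m}`: `wt*(0)=0`, `wt*(m)=m`, `wt*(x)=m/2` otherwise. -/
def wtStar (m : ℕ) (x : ZMod (2 * m)) : ℕ :=
  if x = 0 then 0 else if x = (m : ZMod (2 * m)) then m else m / 2

/-- The induced distance `d*` on `Z_{2m}^n`. -/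
def dStar (m n : ℕ) (x y : Fin n → ZMod (2 * m)) : ℕ :=
  ∑ i, wtStar m (y i - x i)

/-- The generalized Gray map `φ : Z_{2m}^n → Z_2^{mn}`. -/
def grayMap (m n : ℕ) (a : ZMod (2 * m) → Fin m → ZMod 2)
    (x : Fin n → ZMod (2 * m)) : Fin n × Fin m → ZMod 2 :=
  fun p => a (x p.1) p.2

lemma grayMap_hammingDist (m n : ℕ) (a : ZMod (2 * m) → Fin m → ZMod 2)
    (x y : Fin n → ZMod (2 * m)) :
    hammingDist (grayMap m n a x) (grayMap m n a y)
      = ∑ i, hammingDist (a (x i)) (a (y i)) := by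
  unfold hammingDist grayMap
  simp only [Finset.card_filter]
  rw [Fintype.sum_prod_type]

/-- If `C ⊆ Z_{2m}^n` is an `(n,M,d)*`-code, then `φ(C)` is a binary `(mn,M,d)`-code. -/
theorem stmt_1 (m n M d : ℕ) (hm : 2 ≤ m)
    (a : ZMod (2 * m) → Fin m → ZMod 2)
    (ha_inj : Function.Injective a)
    (ha_zero : a 0 = 0)
    (ha_compl : ∀ x : ZMod (2 * m), a (x + (m : ZMod (2 * m))) = a x + 1)
    (ha_dist : ∀ x y : ZMod (2 * m), x ≠ y → m / 2 ≤ hammingDist (a x) (a y))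
    (C : Finset (Fin n → ZMod (2 * m)))
    (hM : C.card = M)
    (hd : ∀ x ∈ C, ∀ y ∈ C, x ≠ y → d ≤ dStar m n x y) :
    (C.image (grayMap m n a)).card = M ∧
      ∀ u ∈ C.image (grayMap m n a), ∀ v ∈ C.image (grayMap m n a),
        u ≠ v → d ≤ hammingDist u v := by
  have hg_inj : Function.Injective (grayMap m n a) := by
    intro x y h
    funext i
    apply ha_inj
    funext j
    exact congrFun h (i, j)
  constructor
  · rw [Finset.card_image_of_injective _ hg_inj, hM]
  · intro u hu v hv huv
    obtain ⟨x, hx, rfl⟩ := Finset.mem_image.mp hu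
    obtain ⟨y, hy, rfl⟩ := Finset.mem_image.mp hv
    have hxy : x ≠ y := fun h => huv (by rw [h])
    refine le_trans (hd x hx y hy hxy) ?_
    rw [grayMap_hammingDist]
    unfold dStar
    apply Finset.sum_le_sum
    intro i _
    unfold wtStar
    by_cases h0 : y i - x i = 0
    · simp [h0]
    · rw [if_neg h0]
      by_cases h1 : y i - x i = (m : ZMod (2 * m))
      · rw [if_pos h1]
        have hy : y i = x i + (m : ZMod (2 * m)) := by
          rw [← h1]; ring
        rw [hy, ha_compl]
        have : hammingDist (a (x i)) (a (x i) + 1) = m := by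
          unfold hammingDist
          have : ({j | a (x i) j ≠ (a (x i) + 1) j} : Finset (Fin m)) = Finset.univ := by
            ext j
            simp only [Finset.mem_filter, Finset.mem_univ, true_and, Pi.add_apply,
              Pi.one_apply, iff_true]
            intro h
            have : (1 : ZMod 2) = 0 := by
              have := congrArg (· - a (x i) j) h
              simpa using this.symm
            simp at this
          rw [this, Finset.card_univ, Fintype.card_fin]
        rw [this]
      · rw [if_neg h1]
        apply ha_dist
        intro h
        exact h0 (by rw [h]; ring)
end

section
/- Let m = 2^{k-1} ≥ 4 and let {H_0, ..., H_{2m-1}} be a partition of Z_2^m into extended 1-perfect (m, 2^m/(2m), 4) codes, where H_0 contains the all-zero word and the parity of the weights of codewords of H_j equals the parity of j. Define Φ(x_1,...,x_n) = H_{x_1} × ... × H_{x_n} ⊆ Z_2^{mn} and Φ(C) = ⋃_{x̄ ∈ C} Φ(x̄). If C ⊆ Z_{2m}^n has cardinality M and minimum d^◇-distance at least d between distinct elements, then Φ(C) is a binary code of length mn, cardinality M·(2^m/(2m))^n, and minimum Hamming distance exactly min(4, d). -/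
/-- The weight `wt^◇` on `Z_M`: `wt^◇(0)=0`, `wt^◇(x)=1` for odd `x`,
`wt^◇(x)=2` for nonzero even `x`. -/
def wtDia {M : ℕ} (x : ZMod M) : ℕ :=
  if x = 0 then 0 else if Odd x.val then 1 else 2

/-- The induced distance `d^◇`. -/
def dDia {M : ℕ} (n : ℕ) (x y : Fin n → ZMod M) : ℕ :=
  ∑ i, wtDia (y i - x i)

/-!
Words of `Φ(C)` built on the same `x ∈ C` differ inside a single extended 1-perfect code
`H_{x_i}`, hence in at least 4 positions. Words built on `x ≠ y` have, in every coordinate with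
`x_i ≠ y_i`, distinct blocks (the `H_j` partition `Z_2^m`), which differ in at least one position,
and in at least two when `y_i - x_i` is even: then the weights in `H_{x_i}` and `H_{y_i}` have the
same parity, so the distance of the blocks is even. Summing over the blocks bounds the distance
below by `d^◇(x, y) ≥ d`.
-/

open Finset Function

section BlockCode

variable {A F ι κ : Type*}

/-- The code `Φ(C)`. -/
def blockCode (H : A → Finset (ι → F)) (C : Finset (κ → A)) : Set (κ × ι → F) :=
  {u | ∃ x ∈ C, ∀ i, (fun j => u (i, j)) ∈ H (x i)}

theorem ncard_blockCode [Fintype κ] [Finite ι] {H : A → Finset (ι → F)} {s : ℕ}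
    (hdisj : Pairwise (Disjoint on H)) (hcard : ∀ j, (H j).card = s) (C : Finset (κ → A)) :
    (blockCode H C).ncard = C.card * s ^ Fintype.card κ := by
  classical
  have := Fintype.ofFinite ι
  have hC : blockCode H C = ↑(C.biUnion fun x => (Fintype.piFinset fun i => H (x i)).map
      (Equiv.curry κ ι F).symm.toEmbedding) := by
    ext u
    simp only [blockCode, Set.mem_ofPred_eq, coe_biUnion, Set.mem_iUnion, mem_coe,
      mem_map_equiv, Equiv.symm_symm, Fintype.mem_piFinset, exists_prop]
    rfl
  rw [hC, Set.ncard_coe_finset, card_biUnion]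
  · simp [hcard]
  · intro x _ y _ hxy
    obtain ⟨i, hi⟩ := Function.ne_iff.mp hxy
    exact (disjoint_map _).mpr (Fintype.piFinset_disjoint_of_disjoint _ _ (hdisj hi))

theorem hammingDist_eq_sum_blocks [Fintype κ] [Fintype ι] [DecidableEq F] (u v : κ × ι → F) :
    hammingDist u v = ∑ i, hammingDist (fun j => u (i, j)) (fun j => v (i, j)) := by
  simp only [hammingDist, card_filter, Fintype.sum_prod_type]

theorem min_le_hammingDist_of_mem_blockCode [Fintype κ] [Fintype ι] [DecidableEq F]
    {H : A → Finset (ι → F)} {C : Finset (κ → A)} (w : A → A → ℕ) {δ d : ℕ}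
    (hδ : ∀ j, ∀ a ∈ H j, ∀ b ∈ H j, a ≠ b → δ ≤ hammingDist a b)
    (hw : ∀ j j', ∀ a ∈ H j, ∀ b ∈ H j', w j j' ≤ hammingDist a b)
    (hd : ∀ x ∈ C, ∀ y ∈ C, x ≠ y → d ≤ ∑ i, w (x i) (y i))
    {u v : κ × ι → F} (hu : u ∈ blockCode H C) (hv : v ∈ blockCode H C) (huv : u ≠ v) :
    min δ d ≤ hammingDist u v := by
  obtain ⟨x, hx, hux⟩ := hu
  obtain ⟨y, hy, hvy⟩ := hv
  rw [hammingDist_eq_sum_blocks]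
  by_cases hxy : x = y
  · subst hxy
    obtain ⟨i, hi⟩ : ∃ i, (fun j => u (i, j)) ≠ (fun j => v (i, j)) := by
      by_contra! h
      exact huv (funext fun p => congrFun (h p.1) p.2)
    calc min δ d ≤ δ := min_le_left _ _
      _ ≤ hammingDist (fun j => u (i, j)) (fun j => v (i, j)) := hδ _ _ (hux i) _ (hvy i) hi
      _ ≤ _ := single_le_sum (f := fun i => hammingDist (fun j => u (i, j)) (fun j => v (i, j)))
          (fun _ _ => Nat.zero_le _) (mem_univ i)
  · calc min δ d ≤ d := min_le_right _ _
      _ ≤ ∑ i, w (x i) (y i) := hd x hx y hy hxy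
      _ ≤ _ := sum_le_sum fun i _ => hw _ _ _ (hux i) _ (hvy i)

end BlockCode

section Parity

variable {ι : Type*} [Fintype ι]

theorem natCast_hammingNorm_zmod_two (a : ι → ZMod 2) : (hammingNorm a : ZMod 2) = ∑ i, a i := by
  classical
  have h : ∀ c : ZMod 2, c = if c ≠ 0 then 1 else 0 := by decide
  rw [hammingNorm, ← sum_boole]
  exact sum_congr rfl fun i _ => (h (a i)).symm

theorem natCast_hammingDist_zmod_two (a b : ι → ZMod 2) :
    (hammingDist a b : ZMod 2) = hammingNorm b - hammingNorm a := by
  rw [hammingDist_eq_hammingNorm, natCast_hammingNorm_zmod_two, natCast_hammingNorm_zmod_two,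
    natCast_hammingNorm_zmod_two]
  simp only [Pi.add_apply, Pi.neg_apply, neg_add_eq_sub, sum_sub_distrib]

theorem wtDia_sub_le_hammingDist {N : ℕ} [NeZero N] (hN : 2 ∣ N) {j j' : ZMod N}
    {a b : ι → ZMod 2} (hab : a ≠ b) (ha : hammingNorm a % 2 = j.val % 2)
    (hb : hammingNorm b % 2 = j'.val % 2) : wtDia (j' - j) ≤ hammingDist a b := by
  have hpos : 0 < hammingDist a b := hammingDist_pos.mpr hab
  unfold wtDia
  split_ifs with _ hodd
  · exact Nat.zero_le _
  · exact hpos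
  · have hsub : ((j' - j).val : ZMod 2) = j'.val - j.val := by
      simp only [← ZMod.cast_eq_val, ZMod.cast_sub hN]
    have heven : Even (hammingDist a b) := by
      rw [← ZMod.natCast_eq_zero_iff_even, natCast_hammingDist_zmod_two,
        (ZMod.natCast_eq_natCast_iff' _ _ 2).mpr ha, (ZMod.natCast_eq_natCast_iff' _ _ 2).mpr hb,
        ← hsub, ZMod.natCast_eq_zero_iff_even]
      exact Nat.not_odd_iff_even.mp hodd
    obtain ⟨r, hr⟩ := heven
    omega

end Parity

theorem stmt_2_general (k n M d : ℕ)
    (H : ZMod (2 * 2 ^ (k - 1)) → Finset (Fin (2 ^ (k - 1)) → ZMod 2))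
    (hpart : ∀ u : Fin (2 ^ (k - 1)) → ZMod 2, ∃! j, u ∈ H j)
    (hcard : ∀ j, (H j).card = 2 ^ (2 ^ (k - 1)) / (2 * 2 ^ (k - 1)))
    (hdist4 : ∀ j, ∀ u ∈ H j, ∀ v ∈ H j, u ≠ v → 4 ≤ hammingDist u v)
    (hparity : ∀ j, ∀ u ∈ H j, hammingNorm u % 2 = (ZMod.val j) % 2)
    (C : Finset (Fin n → ZMod (2 * 2 ^ (k - 1))))
    (hM : C.card = M)
    (hd : ∀ x ∈ C, ∀ y ∈ C, x ≠ y → d ≤ dDia n x y) :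
    ({u : Fin n × Fin (2 ^ (k - 1)) → ZMod 2 |
        ∃ x ∈ C, ∀ i, (fun j => u (i, j)) ∈ H (x i)}.ncard
        = M * (2 ^ (2 ^ (k - 1)) / (2 * 2 ^ (k - 1))) ^ n) ∧
      ∀ u ∈ {u : Fin n × Fin (2 ^ (k - 1)) → ZMod 2 |
          ∃ x ∈ C, ∀ i, (fun j => u (i, j)) ∈ H (x i)},
        ∀ v ∈ {u : Fin n × Fin (2 ^ (k - 1)) → ZMod 2 |
          ∃ x ∈ C, ∀ i, (fun j => u (i, j)) ∈ H (x i)},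
        u ≠ v → min 4 d ≤ hammingDist u v := by
  have hdisj : Pairwise (Disjoint on H) := fun j j' hne =>
    disjoint_left.mpr fun a ha ha' => hne ((hpart a).unique ha ha')
  have hw : ∀ j j', ∀ a ∈ H j, ∀ b ∈ H j', wtDia (j' - j) ≤ hammingDist a b := by
    intro j j' a ha b hb
    by_cases hab : a = b
    · subst hab
      simp [(hpart a).unique hb ha, wtDia]
    · exact wtDia_sub_le_hammingDist ⟨2 ^ (k - 1), rfl⟩ hab (hparity j a ha) (hparity j' b hb)
  refine ⟨?_, fun u hu v hv huv => ?_⟩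
  · have h := ncard_blockCode hdisj hcard C
    rwa [hM, Fintype.card_fin] at h
  · exact min_le_hammingDist_of_mem_blockCode (fun j j' => wtDia (j' - j)) hdist4 hw hd hu hv huv

/-- If `C ⊆ Z_{2m}^n` (with `m = 2^{k-1} ≥ 4`) is an `(n,M,d)^◇`-code and
`{H_j}` is a partition of `Z_2^m` into extended 1-perfect codes as in the
definition of `Φ`, then `Φ(C)` is a binary code of length `mn`, cardinality
`M·(2^m/(2m))^n` and minimum Hamming distance `min(4,d)`. -/
theorem stmt_2 (k n M d : ℕ) (hk : 3 ≤ k)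
    (H : ZMod (2 * 2 ^ (k - 1)) → Finset (Fin (2 ^ (k - 1)) → ZMod 2))
    (hpart : ∀ u : Fin (2 ^ (k - 1)) → ZMod 2, ∃! j, u ∈ H j)
    (hcard : ∀ j, (H j).card = 2 ^ (2 ^ (k - 1)) / (2 * 2 ^ (k - 1)))
    (hdist4 : ∀ j, ∀ u ∈ H j, ∀ v ∈ H j, u ≠ v → 4 ≤ hammingDist u v)
    (hzero : (0 : Fin (2 ^ (k - 1)) → ZMod 2) ∈ H 0)
    (hparity : ∀ j, ∀ u ∈ H j, hammingNorm u % 2 = (ZMod.val j) % 2)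
    (C : Finset (Fin n → ZMod (2 * 2 ^ (k - 1))))
    (hM : C.card = M)
    (hd : ∀ x ∈ C, ∀ y ∈ C, x ≠ y → d ≤ dDia n x y) :
    ({u : Fin n × Fin (2 ^ (k - 1)) → ZMod 2 |
        ∃ x ∈ C, ∀ i, (fun j => u (i, j)) ∈ H (x i)}.ncard
        = M * (2 ^ (2 ^ (k - 1)) / (2 * 2 ^ (k - 1))) ^ n) ∧
      ∀ u ∈ {u : Fin n × Fin (2 ^ (k - 1)) → ZMod 2 |
          ∃ x ∈ C, ∀ i, (fun j => u (i, j)) ∈ H (x i)},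
        ∀ v ∈ {u : Fin n × Fin (2 ^ (k - 1)) → ZMod 2 |
          ∃ x ∈ C, ∀ i, (fun j => u (i, j)) ∈ H (x i)},
        u ≠ v → min 4 d ≤ hammingDist u v :=
  stmt_2_general k n M d H hpart hcard hdist4 hparity C hM hd
end

section
/- Let G = (V, E) be a regular bipartite graph of degree r > 0 with graph metric d^G. A subset C ⊆ V contained in one part of the bipartition such that every vertex of the other part is adjacent to exactly one element of C (a 1'-perfect code) exists as C if and only if |C| = |V|/(2r) and d^G(c_1, c_2) ≥ 4 for all distinct c_1, c_2 ∈ C. -/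
open Finset

section Aux

variable {V : Type*} {G : SimpleGraph V} {Vev Vod : Set V}

/-- Parity lemma for walks in a bipartite graph. -/
lemma walk_parity (hcover : ∀ v, v ∈ Vev ∨ v ∈ Vod)
    (hdisj : Disjoint Vev Vod)
    (hbip : ∀ u v, G.Adj u v → (u ∈ Vev ↔ v ∈ Vod)) :
    ∀ {u v : V} (p : G.Walk u v), ((u ∈ Vev ↔ v ∈ Vev) ↔ Even p.length) := by
  intro u v p
  induction p with
  | nil => simp
  | @cons a b c h q ih =>
    have hodb : b ∈ Vod ↔ ¬ b ∈ Vev := by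
      constructor
      · intro hw hwe
        exact hdisj.ne_of_mem hwe hw rfl
      · intro hw
        rcases hcover b with h1 | h1
        · exact absurd h1 hw
        · exact h1
    have hab : a ∈ Vev ↔ ¬ b ∈ Vev := (hbip a b h).trans hodb
    simp only [SimpleGraph.Walk.length_cons, Nat.even_add_one, ← ih]
    tauto

end Aux

/-- Characterization of 1'-perfect codes: in a connected regular bipartite graph of
degree `r > 0` with parts `Vev`, `Vod`, a set `C ⊆ Vev` is a 1'-perfect code
(every vertex of `Vod` is adjacent to exactly one element of `C`) iff
`|C| = |V|/(2r)` and the pairwise graph distance in `C` is at least `4`. -/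
theorem stmt_3 {V : Type*} [Fintype V] (G : SimpleGraph V) [DecidableRel G.Adj]
    (r : ℕ) (hr : 0 < r)
    (hreg : G.IsRegularOfDegree r) (hconn : G.Connected)
    (Vev Vod : Set V)
    (hcover : ∀ v, v ∈ Vev ∨ v ∈ Vod)
    (hdisj : Disjoint Vev Vod)
    (hbip : ∀ u v, G.Adj u v → (u ∈ Vev ↔ v ∈ Vod))
    (C : Set V) (hC : C ⊆ Vev) :
    (∀ x ∈ Vod, ∃! c, c ∈ C ∧ G.Adj x c) ↔
      (2 * r * C.ncard = Fintype.card V ∧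
        ∀ c₁ ∈ C, ∀ c₂ ∈ C, c₁ ≠ c₂ → 4 ≤ G.dist c₁ c₂) := by
  classical
  have hod : ∀ w, w ∈ Vod ↔ ¬ w ∈ Vev := by
    intro w
    constructor
    · intro hw hwe
      exact hdisj.ne_of_mem hwe hw rfl
    · intro hw
      rcases hcover w with h1 | h1
      · exact absurd h1 hw
      · exact h1
  set Ev : Finset V := univ.filter (· ∈ Vev) with hEv
  set Od : Finset V := univ.filter (· ∈ Vod) with hOd
  set Cf : Finset V := univ.filter (· ∈ C) with hCfdef
  have hCn : C.ncard = Cf.card := by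
    rw [Set.ncard_eq_toFinset_card']
    congr 1
    ext x
    simp [hCfdef]
  -- general double counting lemma
  have key : ∀ (S : Set V), S ⊆ Vev →
      r * (univ.filter (· ∈ S)).card =
        ∑ v ∈ Od, (univ.filter (fun c => c ∈ S ∧ G.Adj v c)).card := by
    intro S hS
    have h1 : ∀ u : V, (∑ v : V, if u ∈ S ∧ G.Adj u v then 1 else 0) =
        if u ∈ S then r else 0 := by
      intro u
      by_cases hu : u ∈ S
      · simp only [hu, true_and, if_true]
        rw [← Finset.card_filter, ← SimpleGraph.neighborFinset_eq_filter]
        exact hreg u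
      · simp [hu]
    have h2 : ∀ v : V, (∑ u : V, if u ∈ S ∧ G.Adj u v then 1 else 0) =
        if v ∈ Vod then (univ.filter (fun c => c ∈ S ∧ G.Adj v c)).card else 0 := by
      intro v
      by_cases hv : v ∈ Vod
      · simp only [hv, if_true]
        rw [Finset.card_filter]
        refine Finset.sum_congr rfl fun u _ => ?_
        congr 1
        rw [G.adj_comm]
      · simp only [hv, if_false]
        refine Finset.sum_eq_zero fun u _ => ?_
        have : ¬ (u ∈ S ∧ G.Adj u v) := by
          rintro ⟨huS, hadj⟩
          exact hv ((hbip u v hadj).mp (hS huS))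
        simp [this]
    calc r * (univ.filter (· ∈ S)).card
        = ∑ u : V, if u ∈ S then r else 0 := by
          rw [← Finset.sum_filter, Finset.sum_const, smul_eq_mul, mul_comm]
      _ = ∑ u : V, ∑ v : V, if u ∈ S ∧ G.Adj u v then 1 else 0 :=
          (Finset.sum_congr rfl fun u _ => (h1 u).symm)
      _ = ∑ v : V, ∑ u : V, if u ∈ S ∧ G.Adj u v then 1 else 0 := Finset.sum_comm
      _ = ∑ v : V, if v ∈ Vod then (univ.filter (fun c => c ∈ S ∧ G.Adj v c)).card
            else 0 := Finset.sum_congr rfl fun v _ => h2 v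
      _ = ∑ v ∈ Od, (univ.filter (fun c => c ∈ S ∧ G.Adj v c)).card :=
          (Finset.sum_filter _ _).symm
  -- |Ev| = |Od|
  have hEvOd : Ev.card = Od.card := by
    have h := key Vev le_rfl
    have h2 : ∀ v ∈ Od, (univ.filter (fun c => c ∈ Vev ∧ G.Adj v c)).card = r := by
      intro v hv
      have hvod : v ∈ Vod := by simpa [hOd] using hv
      have : (univ.filter (fun c => c ∈ Vev ∧ G.Adj v c)) = G.neighborFinset v := by
        ext c
        simp only [Finset.mem_filter, Finset.mem_univ, true_and,
          SimpleGraph.mem_neighborFinset]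
        constructor
        · exact fun hc => hc.2
        · intro hc
          refine ⟨?_, hc⟩
          have := hbip v c hc
          rcases hcover c with h1 | h1
          · exact h1
          · exact absurd (this.mpr h1) ((hod v).mp hvod)
      rw [this]
      exact hreg v
    rw [Finset.sum_congr rfl h2, Finset.sum_const, smul_eq_mul] at h
    have := h.trans (mul_comm _ _)
    exact Nat.eq_of_mul_eq_mul_left hr this
  have hcardV : Ev.card + Od.card = Fintype.card V := by
    have : Od = univ.filter (fun v => ¬ v ∈ Vev) := by
      ext v; simp [hOd, hod v]
    rw [this, hEv]
    exact Finset.card_filter_add_card_filter_not _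
  -- counting for C
  have keyC : r * Cf.card = ∑ v ∈ Od, (univ.filter (fun c => c ∈ C ∧ G.Adj v c)).card :=
    key C hC
  constructor
  · -- forward direction
    intro hperf
    constructor
    · -- cardinality
      have h1 : ∀ v ∈ Od, (univ.filter (fun c => c ∈ C ∧ G.Adj v c)).card = 1 := by
        intro v hv
        have hvod : v ∈ Vod := by simpa [hOd] using hv
        obtain ⟨c, hc, hcu⟩ := hperf v hvod
        rw [Finset.card_eq_one]
        refine ⟨c, ?_⟩
        ext x
        simp only [Finset.mem_filter, Finset.mem_univ, true_and, Finset.mem_singleton]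
        constructor
        · exact fun hx => hcu x hx
        · rintro rfl; exact hc
      rw [Finset.sum_congr rfl h1, Finset.sum_const, smul_eq_mul, mul_one] at keyC
      rw [hCn, mul_assoc]
      omega
    · -- distance
      intro c₁ hc₁ c₂ hc₂ hne
      have hreach : G.Reachable c₁ c₂ := hconn c₁ c₂
      have hpos : 0 < G.dist c₁ c₂ := hreach.pos_dist_of_ne hne
      obtain ⟨p, hp⟩ := hreach.exists_walk_length_eq_dist
      have heven : Even p.length := by
        rw [← walk_parity hcover hdisj hbip p]
        exact iff_of_true (hC hc₁) (hC hc₂)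
      have hne2 : G.dist c₁ c₂ ≠ 2 := by
        intro h2
        rw [h2] at hp
        -- extract middle vertex of a length-2 walk
        cases p with
        | nil => simp at hp
        | @cons _ b _ h q =>
          cases q with
          | nil => simp at hp
          | @cons _ w _ hadj q' =>
            have : q'.length = 0 := by
              simpa [SimpleGraph.Walk.length_cons] using hp
            have hwc : w = c₂ := SimpleGraph.Walk.eq_of_length_eq_zero this
            rw [hwc] at hadj
            have hbod : b ∈ Vod := (hbip c₁ b h).mp (hC hc₁)
            obtain ⟨c, _, hcu⟩ := hperf b hbod
            have e1 : c₁ = c := hcu c₁ ⟨hc₁, h.symm⟩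
            have e2 : c₂ = c := hcu c₂ ⟨hc₂, hadj⟩
            exact hne (e1.trans e2.symm)
      obtain ⟨k, hk⟩ := heven
      rw [← hp] at hpos hne2 ⊢
      omega
  · -- backward direction
    rintro ⟨hcard, hdist⟩ x hx
    -- each vertex of Vod has at most one neighbor in C
    have hle1 : ∀ v, (univ.filter (fun c => c ∈ C ∧ G.Adj v c)).card ≤ 1 := by
      intro v
      rw [Finset.card_le_one]
      intro a ha b hb
      simp only [Finset.mem_filter, Finset.mem_univ, true_and] at ha hb
      by_contra hab
      have h4 := hdist a ha.1 b hb.1 hab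
      have : G.dist a b ≤ 2 := by
        calc G.dist a b ≤ G.dist a v + G.dist v b := hconn.dist_triangle
          _ ≤ 1 + 1 := by
              gcongr
              · exact SimpleGraph.dist_le (SimpleGraph.Walk.cons ha.2.symm
                  SimpleGraph.Walk.nil) |>.trans (by simp)
              · exact SimpleGraph.dist_le (SimpleGraph.Walk.cons hb.2
                  SimpleGraph.Walk.nil) |>.trans (by simp)
          _ = 2 := rfl
      omega
    -- r * |Cf| = |Od|
    have hOdcard : r * Cf.card = Od.card := by
      rw [hCn, mul_assoc] at hcard
      omega
    -- all fibers have size exactly 1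
    have hall : ∀ v ∈ Od, (univ.filter (fun c => c ∈ C ∧ G.Adj v c)).card = 1 := by
      have hsum : ∑ v ∈ Od, (univ.filter (fun c => c ∈ C ∧ G.Adj v c)).card
          = ∑ v ∈ Od, 1 := by
        rw [← keyC, hOdcard, Finset.sum_const, smul_eq_mul, mul_one]
      exact fun v hv =>
        (Finset.sum_eq_sum_iff_of_le (fun v _ => hle1 v)).mp hsum v hv
    have hxOd : x ∈ Od := by simp [hOd, hx]
    obtain ⟨c, hc⟩ := Finset.card_eq_one.mp (hall x hxOd)
    have hcmem : c ∈ C ∧ G.Adj x c := by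
      have : c ∈ univ.filter (fun c => c ∈ C ∧ G.Adj x c) := by
        rw [hc]; exact Finset.mem_singleton_self c
      simpa using this
    refine ⟨c, hcmem, fun y hy => ?_⟩
    have : y ∈ univ.filter (fun c => c ∈ C ∧ G.Adj x c) := by simpa using hy
    rw [hc] at this
    simpa using this
end

section
/- If C is a subset of one part of a regular bipartite graph G of degree r > 0 with |C| = |V|/(2r) and pairwise graph distance at least 4, then every vertex in the other part of the bipartition is adjacent to exactly one element of C. -/
/-- If `C` is a subset of one part of a connected regular bipartite graph of degree
`r > 0` with `|C| = |V|/(2r)` and pairwise graph distance at least `4`, then every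
vertex of the other part is adjacent to exactly one element of `C`. -/
theorem stmt_5 {V : Type*} [Fintype V] (G : SimpleGraph V) [DecidableRel G.Adj]
    (r : ℕ) (hr : 0 < r)
    (hreg : G.IsRegularOfDegree r) (hconn : G.Connected)
    (Vev Vod : Set V)
    (hcover : ∀ v, v ∈ Vev ∨ v ∈ Vod)
    (hdisj : Disjoint Vev Vod)
    (hbip : ∀ u v, G.Adj u v → (u ∈ Vev ↔ v ∈ Vod))
    (C : Set V) (hC : C ⊆ Vev)
    (hcard : 2 * r * C.ncard = Fintype.card V)
    (hdist : ∀ c₁ ∈ C, ∀ c₂ ∈ C, c₁ ≠ c₂ → 4 ≤ G.dist c₁ c₂) :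
    ∀ x ∈ Vod, ∃! c, c ∈ C ∧ G.Adj x c := by
  classical
  have hadj_ev : ∀ u ∈ Vev, ∀ v, G.Adj u v → v ∈ Vod := fun u hu v h => (hbip u v h).1 hu
  -- finsets for the parts
  set s : Finset V := Finset.univ.filter (· ∈ Vev) with hs
  set t : Finset V := Finset.univ.filter (· ∈ Vod) with ht
  -- each vertex of s has all r neighbors in t
  have hnbr_s : ∀ u ∈ s, G.neighborFinset u ⊆ t := by
    intro u hu v hv
    rw [hs, Finset.mem_filter] at hu
    rw [ht, Finset.mem_filter]
    exact ⟨Finset.mem_univ v, hadj_ev u hu.2 v ((G.mem_neighborFinset u v).1 hv)⟩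
  have hfil_s : ∀ u ∈ s, (t.filter (fun v => G.Adj u v)) = G.neighborFinset u := by
    intro u hu
    ext v
    simp only [Finset.mem_filter, SimpleGraph.mem_neighborFinset]
    constructor
    · exact fun h => h.2
    · intro h
      exact ⟨hnbr_s u hu ((G.mem_neighborFinset u v).2 h), h⟩
  have hfil_t : ∀ v ∈ t, (s.filter (fun u => G.Adj u v)) = G.neighborFinset v := by
    intro v hv
    ext u
    simp only [ht, hs, Finset.mem_filter, Finset.mem_univ, true_and,
      SimpleGraph.mem_neighborFinset] at hv ⊢
    constructor
    · exact fun h => h.2.symm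
    · intro h
      exact ⟨(hbip u v h.symm).2 hv, h.symm⟩
  -- double counting edges between s and t
  have hcount : r * s.card = r * t.card := by
    have h1 : ∑ u ∈ s, (t.filter (fun v => G.Adj u v)).card = r * s.card :=
      calc ∑ u ∈ s, (t.filter (fun v => G.Adj u v)).card
          = ∑ _u ∈ s, r := Finset.sum_congr rfl (fun u hu => by
            rw [hfil_s u hu, SimpleGraph.card_neighborFinset_eq_degree]; exact hreg u)
        _ = r * s.card := by simp [mul_comm]
    have h2 : ∑ v ∈ t, (s.filter (fun u => G.Adj u v)).card = r * t.card :=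
      calc ∑ v ∈ t, (s.filter (fun u => G.Adj u v)).card
          = ∑ _v ∈ t, r := Finset.sum_congr rfl (fun v hv => by
            rw [hfil_t v hv, SimpleGraph.card_neighborFinset_eq_degree]; exact hreg v)
        _ = r * t.card := by simp [mul_comm]
    have h3 : ∑ u ∈ s, (t.filter (fun v => G.Adj u v)).card
        = ∑ v ∈ t, (s.filter (fun u => G.Adj u v)).card := by
      simp only [Finset.card_filter]
      exact Finset.sum_comm
    rw [← h1, h3, h2]
  have hst : s.card = t.card := Nat.eq_of_mul_eq_mul_left hr hcount
  have hdisjst : Disjoint s t := by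
    rw [Finset.disjoint_left]
    intro a ha hb
    simp only [hs, ht, Finset.mem_filter, Finset.mem_univ, true_and] at ha hb
    exact hdisj.le_bot ⟨ha, hb⟩ 
  have huniv : s ∪ t = Finset.univ := by
    ext a
    simp only [hs, ht, Finset.mem_union, Finset.mem_filter, Finset.mem_univ, true_and]
    exact ⟨fun _ => trivial, fun _ => hcover a⟩
  have hsum : s.card + t.card = Fintype.card V := by
    rw [← Finset.card_union_of_disjoint hdisjst, huniv, Finset.card_univ]
  have htcard : t.card * 2 = Fintype.card V := by omega
  -- finset for C
  have hCfin : C.Finite := C.toFinite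
  set cF : Finset V := hCfin.toFinset with hcF
  have hmemcF : ∀ a, a ∈ cF ↔ a ∈ C := fun a => hCfin.mem_toFinset
  have hncard : C.ncard = cF.card := Set.ncard_eq_toFinset_card C hCfin
  -- the neighbor sets of elements of C are pairwise disjoint
  have hpair : ∀ c₁ ∈ C, ∀ c₂ ∈ C, ∀ v, G.Adj c₁ v → G.Adj c₂ v → c₁ = c₂ := by
    intro c₁ h₁ c₂ h₂ v ha₁ ha₂
    by_contra hne
    have h4 := hdist c₁ h₁ c₂ h₂ hne
    have hd1 : G.dist c₁ v = 1 := SimpleGraph.dist_eq_one_iff_adj.2 ha₁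
    have hd2 : G.dist v c₂ = 1 := SimpleGraph.dist_eq_one_iff_adj.2 ha₂.symm
    have := hconn.dist_triangle (u := c₁) (v := v) (w := c₂)
    omega
  have hdisjN : ∀ c₁ ∈ cF, ∀ c₂ ∈ cF, c₁ ≠ c₂ →
      Disjoint (G.neighborFinset c₁) (G.neighborFinset c₂) := by
    intro c₁ h₁ c₂ h₂ hne
    rw [Finset.disjoint_left]
    intro v hv₁ hv₂
    exact hne (hpair c₁ ((hmemcF c₁).1 h₁) c₂ ((hmemcF c₂).1 h₂) v
      ((G.mem_neighborFinset c₁ v).1 hv₁) ((G.mem_neighborFinset c₂ v).1 hv₂))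
  set U : Finset V := cF.biUnion (fun c => G.neighborFinset c) with hU
  have hUcard : U.card = r * cF.card := by
    rw [hU, Finset.card_biUnion hdisjN]
    calc ∑ c ∈ cF, (G.neighborFinset c).card
        = ∑ _c ∈ cF, r := Finset.sum_congr rfl (fun c _ => by
          rw [SimpleGraph.card_neighborFinset_eq_degree]; exact hreg c)
      _ = r * cF.card := by simp [mul_comm]
  have hUsub : U ⊆ t := by
    intro v hv
    rw [hU, Finset.mem_biUnion] at hv
    obtain ⟨c, hc, hv⟩ := hv
    have hcs : c ∈ s := by
      simp only [hs, Finset.mem_filter, Finset.mem_univ, true_and]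
      exact hC ((hmemcF c).1 hc)
    exact hnbr_s c hcs hv
  have hUt : U = t := by
    apply Finset.eq_of_subset_of_card_le hUsub
    rw [hUcard]
    have h2a : 2 * (r * cF.card) = Fintype.card V := by
      rw [← mul_assoc, ← hncard]; exact hcard
    omega
  intro x hx
  have hxU : x ∈ U := by
    rw [hUt, ht]
    simp [hx]
  rw [hU, Finset.mem_biUnion] at hxU
  obtain ⟨c, hc, hxc⟩ := hxU
  have hcC : c ∈ C := (hmemcF c).1 hc
  have hadjxc : G.Adj x c := ((G.mem_neighborFinset c x).1 hxc).symm
  refine ⟨c, ⟨hcC, hadjxc⟩, ?_⟩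
  rintro c' ⟨hc'C, hadjxc'⟩
  exact hpair c' hc'C c hcC x hadjxc'.symm hadjxc.symm
end

section
/- Let n = 2^r and let I = (i_1, ..., i_k) be nonnegative integers with 1·i_1 + 2·i_2 + ... + k·i_k = r. Let b_1, ..., b_n ∈ Z_{2^k}^{1+i_1+...+i_k} be all elements of the set {1} × (2^{k-1}Z_{2^k})^{i_1} × (2^{k-2}Z_{2^k})^{i_2} × ... × (2^0 Z_{2^k})^{i_k}, and let B_I be the matrix with columns b_1, ..., b_n. Then the linear code H_I = {h ∈ Z_{2^k}^n | B_I h^T = 0} has minimum d^◇-distance at least 4; in particular, no nonzero codeword has d^◇-weight 1 or 2. -/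
/-- Index type for the rows of `B_I`: one row of ones, plus `I j` rows in block `j`
(`j = 0, …, k-1`, corresponding to `i_{j+1}` in the paper). -/
def colIdx (k : ℕ) (I : Fin k → ℕ) : Type :=
  Unit ⊕ (Σ j : Fin k, Fin (I j))

instance (k : ℕ) (I : Fin k → ℕ) : Fintype (colIdx k I) := by
  unfold colIdx; infer_instance

instance (k : ℕ) (I : Fin k → ℕ) : DecidableEq (colIdx k I) := by
  unfold colIdx; infer_instance

/-- The set `{1} × (2^{k-1}Z_{2^k})^{i_1} × (2^{k-2}Z_{2^k})^{i_2} × … × (2^0 Z_{2^k})^{i_k}`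
of columns of `B_I`. -/
def colSet (k : ℕ) (I : Fin k → ℕ) : Set (colIdx k I → ZMod (2 ^ k)) :=
  {v | v (Sum.inl ()) = 1 ∧
    ∀ (j : Fin k) (t : Fin (I j)),
      ∃ c : ZMod (2 ^ k), v (Sum.inr ⟨j, t⟩) = (2 ^ (k - 1 - j.val) : ZMod (2 ^ k)) * c}

/-- The linear code `H_I = {h | B_I hᵀ = 0}` with parity-check matrix `B_I`,
whose columns are `b 0, …, b (n-1)`. -/
def kerCode (k n : ℕ) {ι : Type} [Fintype ι]
    (b : Fin n → ι → ZMod (2 ^ k)) : Set (Fin n → ZMod (2 ^ k)) :=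
  {h | ∀ t : ι, ∑ i, h i * b i t = 0}

lemma oddCast2 (m : ℕ) : (m : ZMod 2) = if Odd m then 1 else 0 := by
  rw [← ZMod.natCast_mod m 2]
  rcases Nat.even_or_odd m with he | ho
  · simp [Nat.even_iff.mp he, Nat.odd_iff]
  · simp [Nat.odd_iff.mp ho, Nat.odd_iff]

lemma key (k n : ℕ) (hk : 1 ≤ k) {ι : Type} [Fintype ι]
    (b : Fin n → ι → ZMod (2 ^ k))
    (hb_inj : Function.Injective b) (t0 : ι)
    (hone : ∀ i, b i t0 = 1)
    (f : Fin n → ZMod (2 ^ k)) (hf : f ∈ kerCode k n b) (hne : f ≠ 0) :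
    4 ≤ ∑ i, wtDia (f i) := by
  haveI : NeZero (2 ^ k) := ⟨by positivity⟩
  by_contra hlt
  push_neg at hlt
  have hle3 : ∑ i, wtDia (f i) ≤ 3 := by omega
  classical
  set O : Finset (Fin n) := Finset.univ.filter (fun i => Odd (f i).val) with hO
  set E : Finset (Fin n) := Finset.univ.filter (fun i => f i ≠ 0 ∧ ¬ Odd (f i).val) with hE
  -- weight decomposition
  have hw : ∀ i, wtDia (f i) =
      (if Odd (f i).val then 1 else 0) + (if f i ≠ 0 ∧ ¬ Odd (f i).val then 2 else 0) := by
    intro i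
    unfold wtDia
    by_cases h0 : f i = 0
    · simp [h0, ZMod.val_zero, Nat.odd_iff]
    · by_cases ho : Odd (f i).val <;> simp [h0, ho]
  have hsum : ∑ i, wtDia (f i) = O.card + 2 * E.card := by
    simp only [hw, Finset.sum_add_distrib]
    congr 1
    · rw [hO, Finset.card_filter]
    · rw [hE, ← Finset.sum_filter]
      simp [mul_comm]
  -- the ones-row: sum of entries is 0
  have h0 : ∑ i, f i = 0 := by
    have := hf t0
    simpa [hone] using this
  -- parity of |O|
  have hOeven : 2 ∣ O.card := by
    have h2 : (2 : ℕ) ∣ 2 ^ k := dvd_pow_self 2 (by omega)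
    have hφ : ((O.card : ℕ) : ZMod 2) = 0 := by
      have := congrArg (ZMod.castHom h2 (ZMod 2)) h0
      rw [map_sum, map_zero] at this
      have heach : ∀ i, (ZMod.castHom h2 (ZMod 2)) (f i) =
          (if Odd (f i).val then (1 : ZMod 2) else 0) := by
        intro i
        rw [ZMod.castHom_apply, ← ZMod.natCast_val, oddCast2]
      rw [Finset.sum_congr rfl (fun i _ => heach i), ← Finset.sum_filter,
        Finset.sum_const, nsmul_eq_mul, mul_one] at this
      exact this
    exact (ZMod.natCast_eq_zero_iff _ 2).mp hφ
  have hOE : O.card + 2 * E.card ≤ 3 := hsum ▸ hle3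
  -- supports: entries outside O ∪ E are 0
  have hzero : ∀ i, i ∉ O → i ∉ E → f i = 0 := by
    intro i hiO hiE
    rw [hO, Finset.mem_filter] at hiO
    rw [hE, Finset.mem_filter] at hiE
    push_neg at hiO hiE
    by_contra h
    exact (hiO (Finset.mem_univ i)) ((hiE (Finset.mem_univ i)) h)
  have hcase : (O.card = 0 ∧ E.card = 0) ∨ (O.card = 0 ∧ E.card = 1) ∨
      (O.card = 2 ∧ E.card = 0) := by omega
  rcases hcase with ⟨hoc, hec⟩ | ⟨hoc, hec⟩ | ⟨hoc, hec⟩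
  · -- f = 0
    apply hne
    funext i
    have hiO : i ∉ O := by simp [Finset.card_eq_zero.mp hoc]
    have hiE : i ∉ E := by simp [Finset.card_eq_zero.mp hec]
    exact hzero i hiO hiE
  · -- one nonzero even entry
    obtain ⟨i0, hi0⟩ := Finset.card_eq_one.mp hec
    have hi0mem : i0 ∈ E := by simp [hi0]
    have hfi0 : f i0 ≠ 0 := (Finset.mem_filter.mp (hE ▸ hi0mem)).2.1
    apply hfi0
    rw [← h0]
    symm
    apply Finset.sum_eq_single_of_mem i0 (Finset.mem_univ i0)
    intro j _ hj
    apply hzero j (by simp [Finset.card_eq_zero.mp hoc])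
    rw [hi0]
    simp [hj]
  · -- two odd entries
    obtain ⟨i, j, hij, hOij⟩ := Finset.card_eq_two.mp hoc
    have hEempty : E = ∅ := Finset.card_eq_zero.mp hec
    have hz : ∀ l, l ≠ i → l ≠ j → f l = 0 := by
      intro l hli hlj
      apply hzero l (by simp [hOij, hli, hlj]) (by simp [hEempty])
    have hij0 : f i + f j = 0 := by
      rw [← Finset.sum_pair hij, ← h0]
      symm
      apply (Finset.sum_subset (Finset.subset_univ _) _).symm
      intro x _ hx
      simp only [Finset.mem_insert, Finset.mem_singleton, not_or] at hx
      exact hz x hx.1 hx.2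
    have hfj : f j = - f i := by linear_combination hij0
    have hiodd : Odd (f i).val := by
      have hmem : i ∈ O := by rw [hOij]; simp
      rw [hO, Finset.mem_filter] at hmem
      exact hmem.2
    have hunit : IsUnit (f i) := by
      have hcast : ((f i).val : ZMod (2 ^ k)) = f i := by
        rw [ZMod.natCast_val, ZMod.cast_id]
      rw [← hcast, ZMod.isUnit_iff_coprime]
      exact Nat.Coprime.pow_right k (Nat.coprime_two_right.mpr hiodd)
    have hbij : b i = b j := by
      funext t
      have hrow := hf t
      have : f i * b i t + f j * b j t = 0 := by
        rw [← hrow]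
        symm
        apply Finset.sum_eq_add_of_mem i j (Finset.mem_univ i) (Finset.mem_univ j) hij
        intro l _ hl
        rw [hz l hl.1 hl.2, zero_mul]
      rw [hfj] at this
      have h2 : f i * (b i t - b j t) = 0 := by ring_nf; linear_combination this
      exact sub_eq_zero.mp ((hunit.mul_right_eq_zero).mp h2)
    exact hij (hb_inj hbij)

/-- The code `H_I` has minimum `d^◇`-distance at least `4`; in particular no
nonzero codeword has `d^◇`-weight `1` or `2`. -/
theorem stmt_6 (k r : ℕ) (hk : 1 ≤ k) (I : Fin k → ℕ)
    (hI : ∑ j, (j.val + 1) * I j = r)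
    (b : Fin (2 ^ r) → colIdx k I → ZMod (2 ^ k))
    (hb_inj : Function.Injective b)
    (hb_range : Set.range b = colSet k I) :
    (∀ h ∈ kerCode k (2 ^ r) b, ∀ g ∈ kerCode k (2 ^ r) b,
        h ≠ g → 4 ≤ dDia (2 ^ r) h g) ∧
      ∀ h ∈ kerCode k (2 ^ r) b, h ≠ 0 →
        dDia (2 ^ r) h 0 ≠ 1 ∧ dDia (2 ^ r) h 0 ≠ 2 := by
  have hone : ∀ i, b i (Sum.inl ()) = 1 := by
    intro i
    have : b i ∈ colSet k I := hb_range ▸ Set.mem_range_self i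
    exact this.1
  constructor
  · intro h hh g hg hne
    set f : Fin (2 ^ r) → ZMod (2 ^ k) := fun i => g i - h i with hfdef
    have hfmem : f ∈ kerCode k (2 ^ r) b := by
      intro t
      simp only [hfdef, sub_mul, Finset.sum_sub_distrib]
      rw [hg t, hh t, sub_zero]
    have hfne : f ≠ 0 := by
      intro h'
      apply hne
      funext i
      have := congrFun h' i
      simp only [hfdef, Pi.zero_apply] at this
      exact (sub_eq_zero.mp this).symm
    have := key k (2 ^ r) hk b hb_inj (Sum.inl ()) hone f hfmem hfne
    simpa [dDia, hfdef] using this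
  · intro h hh hne
    set f : Fin (2 ^ r) → ZMod (2 ^ k) := fun i => 0 - h i with hfdef
    have hfmem : f ∈ kerCode k (2 ^ r) b := by
      intro t
      simp only [hfdef, zero_sub, neg_mul, Finset.sum_neg_distrib]
      rw [hh t, neg_zero]
    have hfne : f ≠ 0 := by
      intro h'
      apply hne
      funext i
      have := congrFun h' i
      simp only [hfdef, Pi.zero_apply, zero_sub, neg_eq_zero] at this
      exact this
    have h4 := key k (2 ^ r) hk b hb_inj (Sum.inl ()) hone f hfmem hfne
    have hdd : dDia (2 ^ r) h 0 = ∑ i, wtDia (f i) := by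
      simp [dDia, hfdef]
    constructor <;> omega
end

section
/- With B_I and H_I as in the construction (columns of B_I are all elements of {1} × (2^{k-1}Z_{2^k})^{i_1} × ... × (2^0 Z_{2^k})^{i_k}), every word z ∈ Z_{2^k}^n whose coordinate sum is odd lies at d^◇-distance exactly 1 from exactly one codeword of H_I. -/
open Matrix

lemma wtDia_eq_zero_iff {M : ℕ} (x : ZMod M) : wtDia x = 0 ↔ x = 0 := by
  unfold wtDia; split_ifs <;> simp_all

lemma wtDia_eq_one_iff {M : ℕ} (x : ZMod M) : wtDia x = 1 ↔ Odd x.val := by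
  unfold wtDia
  split_ifs with h0 hodd
  · simp [h0]
  · simp [hodd]
  · simp [hodd]

lemma Finset.sum_eq_one_iff_exists_eq_one {ι : Type*} [Fintype ι] [DecidableEq ι] (f : ι → ℕ) :
    ∑ i, f i = 1 ↔ ∃ i, f i = 1 ∧ ∀ j ≠ i, f j = 0 := by
  constructor
  · intro hsum
    obtain ⟨i, hi⟩ : ∃ i, f i ≠ 0 := by
      by_contra! h
      simp [h] at hsum
    have hsplit := Finset.add_sum_erase Finset.univ f (Finset.mem_univ i)
    have hfi : f i = 1 := by omega
    have hrest : ∑ j ∈ Finset.univ.erase i, f j = 0 := by omega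
    exact ⟨i, hfi, fun j hj => Finset.sum_eq_zero_iff.mp hrest j (by simp [hj])⟩
  · rintro ⟨i, hi, hrest⟩
    rw [Finset.sum_eq_single i (fun j _ hj => hrest j hj) (by simp), hi]

lemma dDia_eq_one_iff {M n : ℕ} (x y : Fin n → ZMod M) :
    dDia n x y = 1 ↔ ∃ i, ∃ u : ZMod M, Odd u.val ∧ y = x + Pi.single i u := by
  rw [dDia, Finset.sum_eq_one_iff_exists_eq_one]
  simp only [wtDia_eq_one_iff, wtDia_eq_zero_iff, sub_eq_zero]
  constructor
  · rintro ⟨i, hodd, hrest⟩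
    refine ⟨i, y i - x i, hodd, funext fun j => ?_⟩
    rcases eq_or_ne j i with rfl | hj
    · simp
    · simp [hj, hrest j hj]
  · rintro ⟨i, u, hodd, rfl⟩
    exact ⟨i, by simpa using hodd, fun j hj => by simp [hj]⟩

lemma ZMod.odd_val_iff_isUnit {k : ℕ} (hk : 1 ≤ k) (x : ZMod (2 ^ k)) :
    Odd x.val ↔ IsUnit x := by
  conv_rhs => rw [← ZMod.natCast_zmod_val x]
  rw [ZMod.isUnit_iff_coprime, Nat.coprime_pow_right_iff hk, Nat.coprime_two_right]

lemma ZMod.odd_sum_val_iff {M : ℕ} [NeZero M] (hM : 2 ∣ M) {ι : Type*} (s : Finset ι)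
    (f : ι → ZMod M) : Odd (∑ i ∈ s, (f i).val) ↔ Odd (∑ i ∈ s, f i).val := by
  have hparity (x : ZMod M) : ((x.val : ℕ) : ZMod 2) = ZMod.castHom hM (ZMod 2) x :=
    ZMod.natCast_val x
  rw [← ZMod.natCast_eq_one_iff_odd, ← ZMod.natCast_eq_one_iff_odd, Nat.cast_sum, hparity,
    map_sum]
  simp only [hparity]

lemma mem_kerCode_iff {k n : ℕ} {ι : Type} [Fintype ι] (b : Fin n → ι → ZMod (2 ^ k))
    (h : Fin n → ZMod (2 ^ k)) : h ∈ kerCode k n b ↔ h ᵥ* Matrix.of b = 0 := by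
  simp only [kerCode, Set.mem_ofPred_eq, funext_iff, vecMul, dotProduct, Matrix.of_apply,
    Pi.zero_apply]

section SingleError

variable {R ι : Type*} [CommRing R] {n : ℕ} {b : Fin n → ι → R} {t₀ : ι}
  {P : Submodule R (ι → R)}

lemma add_single_vecMul (z : Fin n → R) (i : Fin n) (u : R) :
    (z + Pi.single i u) ᵥ* Matrix.of b = z ᵥ* Matrix.of b + u • b i := by
  rw [add_vecMul, single_vecMul]
  rfl

theorem existsUnique_unit_error (hb : Function.Injective b)
    (hcol : ∀ v, v ∈ Set.range b ↔ v t₀ = 1 ∧ v ∈ P) (z : Fin n → R)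
    (hz : IsUnit (∑ i, z i)) :
    ∃! h, h ᵥ* Matrix.of b = 0 ∧ ∃ i u, IsUnit u ∧ h = z + Pi.single i u := by
  have hb₀ (i : Fin n) : b i t₀ = 1 := ((hcol _).mp ⟨i, rfl⟩).1
  obtain ⟨s, hs⟩ : ∃ s, z ᵥ* Matrix.of b = s := ⟨_, rfl⟩
  obtain ⟨c, hc⟩ := hz
  have hst₀ : s t₀ = ∑ i, z i := by
    rw [← hs]
    show ∑ i, z i * b i t₀ = _
    simp only [hb₀, mul_one]
  rw [← hst₀] at hc
  have hsP : s ∈ P := by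
    rw [← hs, vecMul_eq_sum]
    exact P.sum_mem fun i _ => P.smul_mem _ ((hcol _).mp ⟨i, rfl⟩).2
  obtain ⟨i, hi⟩ : c⁻¹ • s ∈ Set.range b :=
    (hcol _).mpr ⟨by simp [Units.smul_def, ← hc], P.smul_mem _ hsP⟩
  have hsi : s = (c : R) • b i := by rw [hi, ← Units.smul_def, smul_inv_smul]
  refine ⟨z + Pi.single i (-c : R), ⟨?_, i, -c, c.isUnit.neg, rfl⟩, ?_⟩
  · rw [add_single_vecMul, hs, hsi, neg_smul, add_neg_cancel]
  rintro _ ⟨hker, i', u', -, rfl⟩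
  rw [add_single_vecMul, hs] at hker
  have hu' : u' = -c := by
    have := congr_fun hker t₀
    simp only [Pi.add_apply, Pi.smul_apply, hb₀, smul_eq_mul, mul_one, Pi.zero_apply] at this
    linear_combination this + hc
  have hi' : b i' = b i := by
    rw [hu', hsi, neg_smul, ← sub_eq_add_neg, sub_eq_zero] at hker
    exact (c.isUnit.smul_left_cancel).mp hker.symm
  rw [hb hi', hu']

end SingleError

def blockSubmodule (k : ℕ) (I : Fin k → ℕ) :
    Submodule (ZMod (2 ^ k)) (colIdx k I → ZMod (2 ^ k)) where
  carrier :=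
    {v | ∀ (j : Fin k) (t : Fin (I j)), (2 : ZMod (2 ^ k)) ^ (k - 1 - j.val) ∣ v (.inr ⟨j, t⟩)}
  add_mem' hv hw j t := dvd_add (hv j t) (hw j t)
  zero_mem' _ _ := dvd_zero _
  smul_mem' c _ hv j t := (hv j t).mul_left c

lemma mem_colSet_iff (k : ℕ) (I : Fin k → ℕ) (v : colIdx k I → ZMod (2 ^ k)) :
    v ∈ colSet k I ↔ v (.inl ()) = 1 ∧ v ∈ blockSubmodule k I :=
  Iff.rfl

theorem stmt_7_general (k r : ℕ) (hk : 1 ≤ k) (I : Fin k → ℕ)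
    (b : Fin (2 ^ r) → colIdx k I → ZMod (2 ^ k))
    (hb_inj : Function.Injective b)
    (hb_range : Set.range b = colSet k I) :
    ∀ z : Fin (2 ^ r) → ZMod (2 ^ k), Odd (∑ i, (z i).val) →
      ∃! h, h ∈ kerCode k (2 ^ r) b ∧ dDia (2 ^ r) z h = 1 := by
  intro z hz
  have hcol (v : colIdx k I → ZMod (2 ^ k)) :
      v ∈ Set.range b ↔ v (.inl ()) = 1 ∧ v ∈ blockSubmodule k I := by
    rw [hb_range, mem_colSet_iff]
  have hunit : IsUnit (∑ i, z i) := by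
    rwa [← ZMod.odd_val_iff_isUnit hk, ← ZMod.odd_sum_val_iff (dvd_pow_self 2 (by omega))]
  refine (existsUnique_congr fun h => ?_).mpr (existsUnique_unit_error hb_inj hcol z hunit)
  simp only [mem_kerCode_iff, dDia_eq_one_iff, ZMod.odd_val_iff_isUnit hk]

/-- Every word `z ∈ Z_{2^k}^n` with odd coordinate sum lies at `d^◇`-distance
exactly `1` from exactly one codeword of `H_I`. -/
theorem stmt_7 (k r : ℕ) (hk : 1 ≤ k) (I : Fin k → ℕ)
    (hI : ∑ j, (j.val + 1) * I j = r)
    (b : Fin (2 ^ r) → colIdx k I → ZMod (2 ^ k))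
    (hb_inj : Function.Injective b)
    (hb_range : Set.range b = colSet k I) :
    ∀ z : Fin (2 ^ r) → ZMod (2 ^ k), Odd (∑ i, (z i).val) →
      ∃! h, h ∈ kerCode k (2 ^ r) b ∧ dDia (2 ^ r) z h = 1 :=
  stmt_7_general k r hk I b hb_inj hb_range
end

section
/- Let H ⊆ Z_2^m be an extended 1-perfect (m, 2^m/(2m), 4) code all of whose codewords have odd weight. Then (1/|H|)·W_H(X+Y, X−Y) = X^m − Y^m. -/
/-!
Let `m` be the length and `p(t) = ∑_{c ∈ H} t ^ wt c`. Since `H` has minimum distance at least 3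
and only odd weights, the words `c + eᵢ` are pairwise distinct and of even weight; there are
`|H| m = 2 ^ (m - 1)` of them, so they are exactly the even-weight words. Flipping one coordinate
of a word of weight `w` gives `m - w` words of weight `w + 1` and `w` of weight `w - 1`, hence
`(1 - t²) p' + m t p = ((1 + t) ^ m + (1 - t) ^ m) / 2`. The polynomial
`((1 + t) ^ m - (1 - t) ^ m) / (2 m)` satisfies the same equation, and a solution vanishing at `0`
is unique (its lowest-order term would be killed by the equation), so it equals `p`.
Homogenizing and substituting `(X + Y, X - Y)` gives the theorem.
-/

open Finset Polynomial

theorem add_single_one_add_single_one {ι : Type*} [DecidableEq ι] (x : ι → ZMod 2) (i : ι) :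
    x + Pi.single i 1 + Pi.single i 1 = x := by
  rw [add_assoc, ← Pi.single_add, CharTwo.add_self_eq_zero, Pi.single_zero, add_zero]

section Hamming

variable {ι : Type*} [Fintype ι] [DecidableEq ι]

theorem sum_pow_hammingNorm {R : Type*} [CommSemiring R] (t : R) :
    ∑ x : ι → ZMod 2, t ^ hammingNorm x = (1 + t) ^ Fintype.card ι := by
  have (x : ι → ZMod 2) : t ^ hammingNorm x = ∏ i, if x i = 0 then 1 else t := by
    rw [hammingNorm, card_filter, ← prod_pow_eq_pow_sum]
    exact prod_congr rfl fun i _ => by split_ifs <;> simp_all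
  simp_rw [this, ← Fintype.prod_sum fun (_ : ι) (b : ZMod 2) => if b = 0 then (1 : R) else t]
  rw [show (univ : Finset (ZMod 2)) = {0, 1} by decide]
  simp

theorem hammingNorm_single_one (i : ι) : hammingNorm (Pi.single i 1 : ι → ZMod 2) = 1 := by
  simp [hammingNorm, Pi.single_apply, filter_eq']

theorem hammingNorm_add_single_of_eq_zero {x : ι → ZMod 2} {i : ι} (h : x i = 0) :
    hammingNorm (x + Pi.single i 1) = hammingNorm x + 1 := by
  have : univ.filter (fun j => (x + Pi.single i 1 : ι → ZMod 2) j ≠ 0) =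
      insert i (univ.filter fun j => x j ≠ 0) := by
    ext j
    by_cases hj : j = i
    · subst hj; simp [h]
    · simp [hj]
  rw [hammingNorm, this, card_insert_of_notMem (by simp [h]), hammingNorm]

theorem hammingNorm_add_single_of_ne_zero {x : ι → ZMod 2} {i : ι} (h : x i ≠ 0) :
    hammingNorm (x + Pi.single i 1) + 1 = hammingNorm x := by
  have hflip : (x + Pi.single i 1 : ι → ZMod 2) i = 0 := by
    rw [Pi.add_apply, Fin.eq_one_of_ne_zero (x i) h, Pi.single_eq_same]
    decide
  rw [← hammingNorm_add_single_of_eq_zero hflip, add_single_one_add_single_one]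

theorem sum_pow_hammingNorm_add_single {R : Type*} [CommSemiring R] (t : R) (x : ι → ZMod 2) :
    ∑ i, t ^ hammingNorm (x + Pi.single i 1) =
      (Fintype.card ι - hammingNorm x) • t ^ (hammingNorm x + 1) +
        hammingNorm x • t ^ (hammingNorm x - 1) := by
  have hcard : #{i | x i = 0} + hammingNorm x = Fintype.card ι :=
    card_filter_add_card_filter_not _
  have h₀ : ∀ i ∈ univ.filter (fun i => x i = 0),
      t ^ hammingNorm (x + Pi.single i 1) = t ^ (hammingNorm x + 1) := fun i hi => by
    rw [hammingNorm_add_single_of_eq_zero (mem_filter.1 hi).2]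
  have h₁ : ∀ i ∈ univ.filter (fun i => ¬x i = 0),
      t ^ hammingNorm (x + Pi.single i 1) = t ^ (hammingNorm x - 1) := fun i hi => by
    rw [← hammingNorm_add_single_of_ne_zero (mem_filter.1 hi).2, Nat.add_sub_cancel]
  rw [← sum_filter_add_sum_filter_not univ (fun i => x i = 0), sum_congr rfl h₀,
    sum_congr rfl h₁, sum_const, sum_const, Nat.eq_sub_of_add_eq hcard]
  rfl

theorem even_hammingNorm_add_single {x : ι → ZMod 2} (hx : Odd (hammingNorm x)) (i : ι) :
    Even (hammingNorm (x + Pi.single i 1)) := by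
  by_cases h : x i = 0
  · rw [hammingNorm_add_single_of_eq_zero h]; exact hx.add_one
  · rw [← hammingNorm_add_single_of_ne_zero h, Nat.odd_add_one, Nat.not_odd_iff_even] at hx
    exact hx

theorem two_mul_sum_even_pow_hammingNorm {R : Type*} [CommRing R] (t : R) :
    2 * ∑ x : ι → ZMod 2 with Even (hammingNorm x), t ^ hammingNorm x =
      (1 + t) ^ Fintype.card ι + (1 - t) ^ Fintype.card ι := by
  rw [sub_eq_add_neg, ← sum_pow_hammingNorm, ← sum_pow_hammingNorm, ← sum_add_distrib,
    sum_filter, mul_sum]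
  refine sum_congr rfl fun x _ => ?_
  rcases Nat.even_or_odd (hammingNorm x) with h | h
  · rw [if_pos h, h.neg_pow, two_mul]
  · rw [if_neg (Nat.not_even_iff_odd.2 h), h.neg_pow, mul_zero, add_neg_cancel]

theorem two_mul_card_even_hammingNorm [Nonempty ι] :
    2 * #{x : ι → ZMod 2 | Even (hammingNorm x)} = 2 ^ Fintype.card ι := by
  have := two_mul_sum_even_pow_hammingNorm (ι := ι) (1 : ℤ)
  simp only [one_pow, sum_const, nsmul_eq_mul, mul_one, sub_self, zero_pow Fintype.card_ne_zero,
    add_zero] at this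
  exact_mod_cast this

end Hamming

section NeighborOp

variable {R : Type*} [CommRing R]

noncomputable def neighborOp (m : ℕ) : R[X] →ₗ[R] R[X] :=
  LinearMap.mulLeft R (1 - X ^ 2) ∘ₗ derivative + LinearMap.mulLeft R ((m : R[X]) * X)

theorem neighborOp_apply (m : ℕ) (h : R[X]) :
    neighborOp m h = (1 - X ^ 2) * derivative h + (m : R[X]) * X * h := rfl

theorem neighborOp_X_pow {m w : ℕ} (hw : w ≤ m) :
    neighborOp m (X ^ w : R[X]) = (m - w) • X ^ (w + 1) + w • X ^ (w - 1) := by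
  rw [neighborOp_apply, derivative_X_pow]
  rcases w with _ | w
  · simp [pow_succ]
  · simp only [Nat.cast_sub hw, Nat.add_sub_cancel, nsmul_eq_mul, map_natCast]
    ring

theorem neighborOp_one_add_X_pow_sub_one_sub_X_pow (m : ℕ) :
    neighborOp m ((1 + X) ^ m - (1 - X) ^ m : R[X]) = m • ((1 + X) ^ m + (1 - X) ^ m) := by
  rw [neighborOp_apply]
  rcases m with _ | m
  · simp
  · simp only [derivative_sub, derivative_pow, derivative_add, derivative_sub, derivative_one,
      derivative_X, map_natCast, nsmul_eq_mul, Nat.add_sub_cancel]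
    push_cast
    ring

theorem eq_zero_of_neighborOp_eq_zero [IsDomain R] [CharZero R] {m : ℕ} {h : R[X]}
    (hL : neighborOp m h = 0) (h0 : h.coeff 0 = 0) : h = 0 := by
  by_contra hne
  obtain ⟨g, hg, hgX⟩ := exists_eq_pow_rootMultiplicity_mul_and_not_dvd h hne 0
  rw [map_zero, sub_zero] at hg hgX
  obtain ⟨j, hj⟩ : ∃ j, rootMultiplicity 0 h = j + 1 :=
    Nat.exists_eq_add_one.2
      ((rootMultiplicity_pos hne).2 (by simpa [coeff_zero_eq_eval_zero] using h0))
  rw [hj] at hg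
  have hfactor : X ^ j * ((1 - X ^ 2) * ((j + 1 : R[X]) * g + X * derivative g) +
      (m : R[X]) * X ^ 2 * g) = 0 := by
    rw [← hL, neighborOp_apply, hg]
    simp only [derivative_mul, derivative_X_pow, map_natCast]
    push_cast
    ring
  have hg0 : eval 0 g = 0 := by
    simpa [Nat.cast_add_one_ne_zero] using
      congrArg (eval 0) ((mul_eq_zero.1 hfactor).resolve_left (pow_ne_zero _ X_ne_zero))
  exact hgX (X_dvd_iff.2 (by rwa [coeff_zero_eq_eval_zero]))

end NeighborOp

section Code

variable {ι : Type*} [Fintype ι] [DecidableEq ι] {H : Finset (ι → ZMod 2)}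

theorem hammingDist_add_single_one (x : ι → ZMod 2) (i : ι) :
    hammingDist x (x + Pi.single i 1) = 1 := by
  rw [hammingDist_eq_hammingNorm, neg_add_cancel_left, hammingNorm_single_one]

theorem injOn_add_single (hdist : ∀ u ∈ H, ∀ v ∈ H, u ≠ v → 3 ≤ hammingDist u v) :
    Set.InjOn (fun p : (ι → ZMod 2) × ι => p.1 + Pi.single p.2 1)
      ↑(H ×ˢ (univ : Finset ι)) := by
  rintro ⟨c, i⟩ hc ⟨c', j⟩ hc' (heq : c + Pi.single i 1 = c' + Pi.single j 1)
  simp only [coe_product, coe_univ, Set.mem_prod, mem_coe, Set.mem_univ, and_true] at hc hc'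
  obtain rfl : c = c' := by
    by_contra hne
    have : hammingDist c c' ≤ 2 := calc
      hammingDist c c'
          ≤ hammingDist c (c + Pi.single i 1) + hammingDist (c' + Pi.single j 1) c' :=
        heq ▸ hammingDist_triangle _ _ _
      _ = 2 := by
        rw [hammingDist_comm (c' + _), hammingDist_add_single_one, hammingDist_add_single_one]
    have := hdist c hc c' hc' hne
    omega
  obtain rfl : i = j := by
    by_contra hij
    simpa [hij] using congrFun (add_left_cancel heq) i
  rfl

theorem image_add_single_eq_filter_even
    (hdist : ∀ u ∈ H, ∀ v ∈ H, u ≠ v → 3 ≤ hammingDist u v)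
    (hodd : ∀ c ∈ H, Odd (hammingNorm c))
    (hcard : #H * (2 * Fintype.card ι) = 2 ^ Fintype.card ι) :
    (H ×ˢ univ).image (fun p : (ι → ZMod 2) × ι => p.1 + Pi.single p.2 1) =
      univ.filter (fun x : ι → ZMod 2 => Even (hammingNorm x)) := by
  have : Nonempty ι := Fintype.card_pos_iff.1 (Nat.pos_of_ne_zero fun h => by simp [h] at hcard)
  refine eq_of_subset_of_card_le (fun x hx => ?_) ?_
  · obtain ⟨⟨c, i⟩, hci, rfl⟩ := mem_image.1 hx
    exact mem_filter.2
      ⟨mem_univ _, even_hammingNorm_add_single (hodd c (mem_product.1 hci).1) i⟩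
  · have := two_mul_card_even_hammingNorm (ι := ι)
    rw [card_image_of_injOn (injOn_add_single hdist), card_product, card_univ]
    nlinarith

theorem neighborOp_sum_X_pow_hammingNorm {R : Type*} [CommRing R]
    (hdist : ∀ u ∈ H, ∀ v ∈ H, u ≠ v → 3 ≤ hammingDist u v)
    (hodd : ∀ c ∈ H, Odd (hammingNorm c))
    (hcard : #H * (2 * Fintype.card ι) = 2 ^ Fintype.card ι) :
    neighborOp (Fintype.card ι) (∑ c ∈ H, X ^ hammingNorm c : R[X]) =
      ∑ x : ι → ZMod 2 with Even (hammingNorm x), X ^ hammingNorm x := by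
  rw [← image_add_single_eq_filter_even hdist hodd hcard, sum_image (injOn_add_single hdist),
    sum_product, map_sum]
  refine sum_congr rfl fun c _ => ?_
  rw [sum_pow_hammingNorm_add_single, neighborOp_X_pow hammingNorm_le_card_fintype]

theorem two_mul_card_nsmul_sum_X_pow_hammingNorm {R : Type*} [CommRing R] [IsDomain R]
    [CharZero R]
    (hdist : ∀ u ∈ H, ∀ v ∈ H, u ≠ v → 3 ≤ hammingDist u v)
    (hodd : ∀ c ∈ H, Odd (hammingNorm c))
    (hcard : #H * (2 * Fintype.card ι) = 2 ^ Fintype.card ι) :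
    (2 * Fintype.card ι) • ∑ c ∈ H, X ^ hammingNorm c =
      ((1 + X) ^ Fintype.card ι - (1 - X) ^ Fintype.card ι : R[X]) := by
  rw [← sub_eq_zero]
  refine eq_zero_of_neighborOp_eq_zero (m := Fintype.card ι) ?_ ?_
  · rw [map_sub, map_nsmul, neighborOp_sum_X_pow_hammingNorm hdist hodd hcard,
      neighborOp_one_add_X_pow_sub_one_sub_X_pow, ← two_mul_sum_even_pow_hammingNorm]
    simp only [nsmul_eq_mul, Nat.cast_mul, Nat.cast_ofNat]
    ring
  · simpa [coeff_zero_eq_eval_zero, eval_finsetSum] using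
      Or.inr (sum_eq_zero fun c hc => zero_pow (hodd c hc).pos.ne')

end Code

theorem two_mul_card_mul_sum_pow_mul_pow {ι : Type*} [Fintype ι] {H : Finset (ι → ZMod 2)}
    (hH : (2 * Fintype.card ι) • ∑ c ∈ H, X ^ hammingNorm c =
      ((1 + X) ^ Fintype.card ι - (1 - X) ^ Fintype.card ι : ℝ[X])) (a b : ℝ) :
    (2 * Fintype.card ι : ℝ) *
        ∑ c ∈ H, a ^ (Fintype.card ι - hammingNorm c) * b ^ hammingNorm c =
      (a + b) ^ Fintype.card ι - (a - b) ^ Fintype.card ι := by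
  set m := Fintype.card ι
  have hne : ∀ a ≠ 0, (2 * m : ℝ) * ∑ c ∈ H, a ^ (m - hammingNorm c) * b ^ hammingNorm c =
      (a + b) ^ m - (a - b) ^ m := by
    intro a ha
    have ht := congrArg (eval (b / a)) hH
    simp only [nsmul_eq_mul, eval_mul, eval_natCast, eval_finsetSum, eval_pow, eval_X, eval_sub,
      eval_add, eval_one] at ht
    push_cast at ht
    calc (2 * m : ℝ) * ∑ c ∈ H, a ^ (m - hammingNorm c) * b ^ hammingNorm c
        = a ^ m * ((2 * m : ℝ) * ∑ c ∈ H, (b / a) ^ hammingNorm c) := by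
          rw [mul_left_comm]
          congr 1
          rw [mul_sum]
          refine sum_congr rfl fun c _ => ?_
          rw [div_pow, ← pow_sub_mul_pow a (hammingNorm_le_card_fintype : hammingNorm c ≤ m),
            mul_assoc, mul_div_cancel₀ _ (pow_ne_zero _ ha)]
      _ = (a + b) ^ m - (a - b) ^ m := by
          rw [ht, mul_sub, ← mul_pow, ← mul_pow, mul_add, mul_sub, mul_one,
            mul_div_cancel₀ _ ha]
  exact congrFun (Continuous.ext_on (dense_compl_singleton 0) (by fun_prop) (by fun_prop) hne) a

theorem stmt_10_general (μ : ℕ)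
    (H : Finset (Fin (2 ^ μ) → ZMod 2))
    (hcard : H.card = 2 ^ (2 ^ μ) / (2 * 2 ^ μ))
    (hdist : ∀ u ∈ H, ∀ v ∈ H, u ≠ v → 4 ≤ hammingDist u v)
    (hodd : ∀ c ∈ H, Odd (hammingNorm c)) :
    ∀ X Y : ℝ,
      (H.card : ℝ)⁻¹ *
          ∑ c ∈ H, (X + Y) ^ (2 ^ μ - hammingNorm c) * (X - Y) ^ (hammingNorm c)
        = X ^ (2 ^ μ) - Y ^ (2 ^ μ) := by
  intro X Y
  have hcard' : #H * (2 * Fintype.card (Fin (2 ^ μ))) = 2 ^ Fintype.card (Fin (2 ^ μ)) := by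
    rw [Fintype.card_fin, hcard, ← pow_succ']
    exact Nat.div_mul_cancel (Nat.pow_dvd_pow 2 Nat.lt_two_pow_self)
  have key := two_mul_card_mul_sum_pow_mul_pow (two_mul_card_nsmul_sum_X_pow_hammingNorm
    (fun u hu v hv huv => (hdist u hu v hv huv).trans' (by norm_num)) hodd hcard') (X + Y) (X - Y)
  simp only [Fintype.card_fin] at key hcard'
  have hcardR : (#H : ℝ) * (2 * 2 ^ μ) = 2 ^ 2 ^ μ := by exact_mod_cast hcard'
  have hH : (#H : ℝ) ≠ 0 := left_ne_zero_of_mul (b := 2 * 2 ^ μ) (by rw [hcardR]; positivity)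
  rw [inv_mul_eq_iff_eq_mul₀ hH]
  refine mul_left_cancel₀ (by positivity : (2 * 2 ^ μ : ℝ) ≠ 0) ?_
  push_cast at key
  calc (2 * 2 ^ μ : ℝ) * _ = (2 * X) ^ 2 ^ μ - (2 * Y) ^ 2 ^ μ := by rw [key]; ring_nf
    _ = _ := by rw [mul_pow, mul_pow, ← hcardR]; ring

/-- MacWilliams transform of an extended 1-perfect `(m, 2^m/(2m), 4)` code all of
whose codewords have odd weight: with `m = 2^μ`, `(1/|H|)·W_H(X+Y, X−Y) = X^m − Y^m`. -/
theorem stmt_10 (μ : ℕ) (hμ : 2 ≤ μ)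
    (H : Finset (Fin (2 ^ μ) → ZMod 2))
    (hcard : H.card = 2 ^ (2 ^ μ) / (2 * 2 ^ μ))
    (hdist : ∀ u ∈ H, ∀ v ∈ H, u ≠ v → 4 ≤ hammingDist u v)
    (hodd : ∀ c ∈ H, Odd (hammingNorm c)) :
    ∀ X Y : ℝ,
      (H.card : ℝ)⁻¹ *
          ∑ c ∈ H, (X + Y) ^ (2 ^ μ - hammingNorm c) * (X - Y) ^ (hammingNorm c)
        = X ^ (2 ^ μ) - Y ^ (2 ^ μ) :=
  stmt_10_general μ H hcard hdist hodd
end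

section
/- Let H ⊆ Z_2^m be an extended 1-perfect (m, 2^m/(2m), 4) code all of whose codewords have even weight and which does not contain the all-zero word. Then (1/|H|)·W_H(X+Y, X−Y) = X^m + Y^m − 2(XY)^{m/2}. -/
/-!
Write `Ĥ(v) = ∑_{c ∈ H} (-1)^{v ⬝ c}` (`walshSum H v`). By the MacWilliams identity,
`W_H(X + Y, X - Y) = ∑_v X^{n - |v|} Y^{|v|} Ĥ(v)`, so everything is about `Ĥ`.
Because `H` has even weights, minimum distance 4 and `2n|H| = 2^n`, the words `c + eᵢ` (`c ∈ H`)
are pairwise distinct, odd, and as many as the odd-weight words, so they are all of them.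
Summing `(-1)^{v ⬝ x}` over the odd-weight words in these two ways gives `Ĥ(v) (n - 2|v|) = 0`
whenever `v ≠ 0, 𝟙`. Hence `Ĥ` lives on `0` and `𝟙`, where it equals `|H|`, and on the middle
layer `|v| = n/2`, whose total is `-2|H|` because `∑_v Ĥ(v) = 2^n [0 ∈ H] = 0`.
-/

open Finset

theorem ZMod.eq_zero_or_eq_one (a : ZMod 2) : a = 0 ∨ a = 1 := by
  revert a; decide

theorem AddChar.map_sum_eq_prod {A M ι : Type*} [AddCommMonoid A] [CommMonoid M]
    (ψ : AddChar A M) (s : Finset ι) (f : ι → A) : ψ (∑ i ∈ s, f i) = ∏ i ∈ s, ψ (f i) := by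
  classical
  induction s using Finset.induction_on with
  | empty => simp
  | insert i s hi ih => rw [sum_insert hi, prod_insert hi, AddChar.map_add_eq_mul, ih]

namespace BinaryCode

def signChar : AddChar (ZMod 2) ℝ where
  toFun a := (-1) ^ a.val
  map_zero_eq_one' := by simp
  map_add_eq_mul' a b := by rw [ZMod.val_add, ← neg_one_pow_eq_pow_mod_two, pow_add]

@[simp]
theorem signChar_one : signChar 1 = -1 := pow_one _

variable {ι : Type*} [Fintype ι]

theorem sum_signChar (v : ι → ZMod 2) :
    ∑ i, signChar (v i) = Fintype.card ι - 2 * hammingNorm v := by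
  have h (i : ι) : signChar (v i) = 1 - 2 * if v i ≠ 0 then 1 else 0 := by
    rcases ZMod.eq_zero_or_eq_one (v i) with h | h <;> norm_num [h]
  rw [sum_congr rfl fun i _ => h i, sum_sub_distrib, ← mul_sum, sum_boole]
  simp [hammingNorm]

theorem sum_apply_eq_hammingNorm (x : ι → ZMod 2) : ∑ i, x i = (hammingNorm x : ZMod 2) := by
  have h (i : ι) : x i = if x i ≠ 0 then 1 else 0 := by
    rcases ZMod.eq_zero_or_eq_one (x i) with h | h <;> simp [h]
  rw [sum_congr rfl fun i _ => h i, sum_boole]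
  rfl

theorem hammingNorm_one : hammingNorm (1 : ι → ZMod 2) = Fintype.card ι := by
  simp [hammingNorm]

def walsh (v : ι → ZMod 2) : AddChar (ι → ZMod 2) ℝ :=
  signChar.compAddMonoidHom (AddMonoidHom.mk' (v ⬝ᵥ ·) (dotProduct_add v))

theorem walsh_apply (v x : ι → ZMod 2) : walsh v x = signChar (v ⬝ᵥ x) := rfl

theorem walsh_comm (v x : ι → ZMod 2) : walsh v x = walsh x v := by
  rw [walsh_apply, walsh_apply, dotProduct_comm]

theorem walsh_add_left (v w x : ι → ZMod 2) : walsh (v + w) x = walsh v x * walsh w x := by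
  rw [walsh_apply, add_dotProduct, AddChar.map_add_eq_mul]
  rfl

theorem walsh_eq_prod (v x : ι → ZMod 2) : walsh v x = ∏ i, signChar (v i * x i) :=
  signChar.map_sum_eq_prod _ _

theorem walsh_one_left (x : ι → ZMod 2) : walsh 1 x = signChar (∑ i, x i) := by
  rw [walsh_apply, one_dotProduct]

def walshSum (H : Finset (ι → ZMod 2)) (v : ι → ZMod 2) : ℝ := ∑ c ∈ H, walsh v c

def weightMonomial (X Y : ℝ) (v : ι → ZMod 2) : ℝ :=
  X ^ (Fintype.card ι - hammingNorm v) * Y ^ hammingNorm v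

def weightEnumerator (H : Finset (ι → ZMod 2)) (X Y : ℝ) : ℝ := ∑ c ∈ H, weightMonomial X Y c

theorem prod_ite_eq_weightMonomial (X Y : ℝ) (v : ι → ZMod 2) :
    ∏ i, (if v i = 0 then X else Y) = weightMonomial X Y v := by
  rw [prod_ite, prod_const, prod_const, weightMonomial]
  congr 2
  have := card_filter_add_card_filter_not (s := univ) (fun i => v i = 0)
  rw [card_univ] at this
  simp only [hammingNorm, ne_eq] at this ⊢
  omega

/-- The size condition is `|H| = 2^n / (2n)`, written without division. -/
structure IsExtendedPerfect (H : Finset (ι → ZMod 2)) : Prop where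
  dist : ∀ u ∈ H, ∀ v ∈ H, u ≠ v → 4 ≤ hammingDist u v
  even : ∀ c ∈ H, Even (hammingNorm c)
  card : 2 * (#H * Fintype.card ι) = 2 ^ Fintype.card ι

variable {H : Finset (ι → ZMod 2)}

theorem IsExtendedPerfect.nonempty (hH : IsExtendedPerfect H) : Nonempty ι :=
  Fintype.card_pos_iff.mp <| Nat.pos_of_ne_zero fun hn => by
    have := hH.card
    rw [hn] at this
    omega

theorem IsExtendedPerfect.card_ne_zero (hH : IsExtendedPerfect H) : #H ≠ 0 := fun h => by
  have := hH.card
  rw [h, zero_mul, mul_zero] at this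
  exact (pow_pos two_pos _).ne this

theorem walshSum_zero : walshSum H 0 = #H := by
  simp [walshSum, walsh_apply]

theorem walshSum_one (heven : ∀ c ∈ H, Even (hammingNorm c)) : walshSum H 1 = #H := by
  rw [walshSum, sum_congr rfl fun c hc => ?_, sum_const, nsmul_one]
  rw [walsh_one_left, sum_apply_eq_hammingNorm, (heven c hc).natCast_zmod_two,
    AddChar.map_zero_eq_one]

variable [DecidableEq ι]

theorem walsh_single (v : ι → ZMod 2) (i : ι) : walsh v (Pi.single i 1) = signChar (v i) := by
  rw [walsh_apply, dotProduct_single_one]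

theorem sum_walsh_eq_zero {v : ι → ZMod 2} (hv : v ≠ 0) : ∑ x, walsh v x = 0 := by
  obtain ⟨i, hi⟩ := Function.ne_iff.mp hv
  refine AddChar.sum_eq_zero_iff_ne_zero.mpr (AddChar.ne_zero_iff.mpr ⟨Pi.single i 1, ?_⟩)
  rw [walsh_single, (ZMod.eq_zero_or_eq_one (v i)).resolve_left hi]
  norm_num

theorem sum_walshSum (hzero : 0 ∉ H) : ∑ v, walshSum H v = 0 := by
  unfold walshSum
  rw [sum_comm]
  refine sum_eq_zero fun c hc => ?_
  simp_rw [walsh_comm _ c]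
  exact sum_walsh_eq_zero (ne_of_mem_of_not_mem hc hzero)

theorem sum_weightMonomial_mul_walsh (X Y : ℝ) (c : ι → ZMod 2) :
    ∑ v, weightMonomial X Y v * walsh v c = weightMonomial (X + Y) (X - Y) c := by
  have h (i : ι) : ∑ b : ZMod 2, (if b = 0 then X else Y) * signChar (b * c i)
      = if c i = 0 then X + Y else X - Y := by
    rw [show (univ : Finset (ZMod 2)) = {0, 1} from rfl, sum_pair zero_ne_one]
    rcases ZMod.eq_zero_or_eq_one (c i) with h | h <;> simp [h, sub_eq_add_neg]
  simp_rw [← prod_ite_eq_weightMonomial, walsh_eq_prod, ← prod_mul_distrib, ← h, Fintype.prod_sum]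

theorem weightEnumerator_add_sub_eq_sum_walshSum (X Y : ℝ) :
    weightEnumerator H (X + Y) (X - Y) = ∑ v, weightMonomial X Y v * walshSum H v := by
  simp_rw [weightEnumerator, ← sum_weightMonomial_mul_walsh, walshSum, mul_sum]
  exact sum_comm

variable (ι) in
def oddWords : Finset (ι → ZMod 2) := {x | ∑ i, x i = 1}

theorem two_mul_sum_oddWords (f : (ι → ZMod 2) → ℝ) :
    2 * ∑ x ∈ oddWords ι, f x = ∑ x, f x * (1 - walsh 1 x) := by
  rw [oddWords, sum_filter, mul_sum]
  refine sum_congr rfl fun x _ => ?_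
  rw [walsh_one_left]
  rcases ZMod.eq_zero_or_eq_one (∑ i, x i) with h | h <;> norm_num [h, mul_comm]

theorem two_mul_card_oddWords [Nonempty ι] : 2 * #(oddWords ι) = 2 ^ Fintype.card ι := by
  have h := two_mul_sum_oddWords (ι := ι) 1
  simp only [Pi.one_apply, one_mul, sum_sub_distrib, sum_walsh_eq_zero one_ne_zero, sum_const,
    card_univ, Fintype.card_fun, ZMod.card, nsmul_eq_mul, mul_one, sub_zero] at h
  exact_mod_cast h

theorem sum_oddWords_walsh_eq_zero {v : ι → ZMod 2} (h0 : v ≠ 0) (h1 : v ≠ 1) :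
    ∑ x ∈ oddWords ι, walsh v x = 0 := by
  have hv1 : v + 1 ≠ 0 := fun h => h1 <| funext fun i => by
    simpa [CharTwo.add_eq_zero] using congrFun h i
  have h := two_mul_sum_oddWords (walsh v)
  simp_rw [mul_sub, mul_one, ← walsh_add_left, sum_sub_distrib, sum_walsh_eq_zero h0,
    sum_walsh_eq_zero hv1, sub_zero] at h
  simpa using h

theorem add_single_mem_oddWords {c : ι → ZMod 2} (hc : Even (hammingNorm c)) (i : ι) :
    c + Pi.single i 1 ∈ oddWords ι := by
  simp only [oddWords, mem_filter, mem_univ, true_and, Pi.add_apply, sum_add_distrib,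
    Fintype.sum_pi_single', sum_apply_eq_hammingNorm c, hc.natCast_zmod_two, zero_add]

theorem hammingNorm_single_one (i : ι) : hammingNorm (Pi.single i 1 : ι → ZMod 2) = 1 := by
  simp [hammingNorm, Pi.single_apply, filter_eq']

theorem hammingDist_add_single_le (c : ι → ZMod 2) (i : ι) :
    hammingDist c (c + Pi.single i 1) ≤ 1 := by
  rw [hammingDist_eq_hammingNorm, neg_add_cancel_left, hammingNorm_single_one]

theorem injOn_add_single (hdist : ∀ u ∈ H, ∀ v ∈ H, u ≠ v → 3 ≤ hammingDist u v) :
    Set.InjOn (fun p : (ι → ZMod 2) × ι => p.1 + Pi.single p.2 1)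
      (H ×ˢ (univ : Finset ι) : Finset _) := by
  rintro ⟨c, i⟩ hci ⟨d, j⟩ hdj (h : c + Pi.single i 1 = d + Pi.single j 1)
  simp only [coe_product, coe_univ, Set.mem_prod, mem_coe, Set.mem_univ, and_true] at hci hdj
  obtain rfl : c = d := by
    by_contra hne
    have hfar := hdist c hci d hdj hne
    have hnear : hammingDist c d ≤ 1 + 1 := calc
      hammingDist c d
          ≤ hammingDist c (c + Pi.single i 1) + hammingDist (d + Pi.single j 1) d := by
        rw [← h]; exact hammingDist_triangle _ _ _
      _ ≤ 1 + 1 := by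
        rw [hammingDist_comm (d + _)]
        exact add_le_add (hammingDist_add_single_le c i) (hammingDist_add_single_le d j)
    omega
  have hij := congrFun (add_left_cancel h) i
  simp only [Pi.single_eq_same, Pi.single_apply] at hij
  split_ifs at hij with hij'
  · rw [hij']
  · exact absurd hij one_ne_zero

namespace IsExtendedPerfect

theorem sum_oddWords_eq_sum_add_single (hH : IsExtendedPerfect H) (f : (ι → ZMod 2) → ℝ) :
    ∑ x ∈ oddWords ι, f x = ∑ c ∈ H, ∑ i, f (c + Pi.single i 1) := by
  have hinj := injOn_add_single fun u hu v hv huv => (hH.dist u hu v hv huv).trans' (by norm_num)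
  have himage : (H ×ˢ univ).image (fun p : (ι → ZMod 2) × ι => p.1 + Pi.single p.2 1)
      = oddWords ι := by
    refine eq_of_subset_of_card_le ?_ ?_
    · simp only [subset_iff, mem_image, mem_product, mem_univ, and_true]
      rintro _ ⟨⟨c, i⟩, hc, rfl⟩
      exact add_single_mem_oddWords (hH.even c hc) i
    · have := hH.nonempty
      have := two_mul_card_oddWords (ι := ι)
      have := hH.card
      rw [card_image_of_injOn hinj, card_product, card_univ]
      omega
  rw [← himage, sum_image hinj, sum_product]

theorem walshSum_mul_eq_sum_oddWords (hH : IsExtendedPerfect H) (v : ι → ZMod 2) :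
    walshSum H v * (Fintype.card ι - 2 * hammingNorm v) = ∑ x ∈ oddWords ι, walsh v x := by
  simp_rw [hH.sum_oddWords_eq_sum_add_single, AddChar.map_add_eq_mul, walsh_single, ← mul_sum,
    sum_signChar, walshSum, sum_mul]

theorem walshSum_eq_zero (hH : IsExtendedPerfect H) {v : ι → ZMod 2} (h0 : v ≠ 0) (h1 : v ≠ 1)
    (hv : 2 * hammingNorm v ≠ Fintype.card ι) : walshSum H v = 0 := by
  have h := hH.walshSum_mul_eq_sum_oddWords v
  rw [sum_oddWords_walsh_eq_zero h0 h1] at h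
  refine (mul_eq_zero.mp h).resolve_right (sub_ne_zero.mpr fun h' => hv ?_)
  exact_mod_cast h'.symm

theorem sum_mul_walshSum (hH : IsExtendedPerfect H) (g : (ι → ZMod 2) → ℝ) :
    ∑ v, g v * walshSum H v
      = #H * (g 0 + g 1) + ∑ v with 2 * hammingNorm v = Fintype.card ι, g v * walshSum H v := by
  have := hH.nonempty
  rw [← sum_filter_add_sum_filter_not univ (fun v => 2 * hammingNorm v = Fintype.card ι),
    add_comm]
  congr 1
  have h0 : (0 : ι → ZMod 2) ∈ univ.filter (fun v => ¬2 * hammingNorm v = Fintype.card ι) := by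
    simp [hammingNorm_zero, eq_comm]
  have h1 : (1 : ι → ZMod 2) ∈ univ.filter (fun v => ¬2 * hammingNorm v = Fintype.card ι) := by
    simp [hammingNorm_one]
  rw [sum_eq_add_of_mem 0 1 h0 h1 zero_ne_one, walshSum_zero, walshSum_one hH.even]
  · ring
  · simp only [mem_filter, mem_univ, true_and]
    exact fun v hv ⟨h0, h1⟩ => by rw [hH.walshSum_eq_zero h0 h1 hv, mul_zero]

theorem weightEnumerator_add_sub (hH : IsExtendedPerfect H) (hzero : 0 ∉ H) {m : ℕ}
    (hm : 2 * m = Fintype.card ι) (X Y : ℝ) :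
    weightEnumerator H (X + Y) (X - Y)
      = #H * (X ^ Fintype.card ι + Y ^ Fintype.card ι - 2 * (X * Y) ^ m) := by
  have hmiddle : ∀ v ∈ univ.filter (fun v => 2 * hammingNorm v = Fintype.card ι),
      weightMonomial X Y v * walshSum H v = (X * Y) ^ m * walshSum H v := by
    intro v hv
    rw [mem_filter] at hv
    rw [weightMonomial, show Fintype.card ι - hammingNorm v = m by omega,
      show hammingNorm v = m by omega, mul_pow]
  have htotal := hH.sum_mul_walshSum 1
  simp only [Pi.one_apply, one_mul, sum_walshSum hzero] at htotal
  rw [weightEnumerator_add_sub_eq_sum_walshSum, hH.sum_mul_walshSum, sum_congr rfl hmiddle,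
    ← mul_sum, weightMonomial, weightMonomial, hammingNorm_zero, hammingNorm_one, Nat.sub_zero,
    Nat.sub_self, pow_zero, pow_zero, mul_one, one_mul]
  linear_combination (-(X * Y) ^ m) * htotal

end IsExtendedPerfect

end BinaryCode

open BinaryCode

/-- MacWilliams transform of an extended 1-perfect `(m, 2^m/(2m), 4)` code all of
whose codewords have even weight and which does not contain the all-zero word:
with `m = 2^μ`, `(1/|H|)·W_H(X+Y, X−Y) = X^m + Y^m − 2(XY)^{m/2}`. -/
theorem stmt_11 (μ : ℕ) (hμ : 2 ≤ μ)
    (H : Finset (Fin (2 ^ μ) → ZMod 2))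
    (hcard : H.card = 2 ^ (2 ^ μ) / (2 * 2 ^ μ))
    (hdist : ∀ u ∈ H, ∀ v ∈ H, u ≠ v → 4 ≤ hammingDist u v)
    (heven : ∀ c ∈ H, Even (hammingNorm c))
    (hzero : (0 : Fin (2 ^ μ) → ZMod 2) ∉ H) :
    ∀ X Y : ℝ,
      (H.card : ℝ)⁻¹ *
          ∑ c ∈ H, (X + Y) ^ (2 ^ μ - hammingNorm c) * (X - Y) ^ (hammingNorm c)
        = X ^ (2 ^ μ) + Y ^ (2 ^ μ) - 2 * (X * Y) ^ (2 ^ (μ - 1)) := by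
  intro X Y
  have hH : IsExtendedPerfect H := by
    refine ⟨hdist, heven, ?_⟩
    rw [Fintype.card_fin, hcard, mul_left_comm, Nat.div_mul_cancel]
    rw [← pow_succ']
    exact Nat.pow_dvd_pow 2 Nat.lt_two_pow_self
  have hm : 2 * 2 ^ (μ - 1) = Fintype.card (Fin (2 ^ μ)) := by
    rw [Fintype.card_fin, ← pow_succ']
    congr 1
    omega
  have key := hH.weightEnumerator_add_sub hzero hm X Y
  simp only [weightEnumerator, weightMonomial, Fintype.card_fin] at key
  rw [key, inv_mul_cancel_left₀ (Nat.cast_ne_zero.mpr hH.card_ne_zero)]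
end
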